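/- Inversion for lambda: if Δ; Γ ⊢ λM : C is derivable, then there exist types A, B such that Δ;Γ ⊢ C ≡ Π A.B (at some sort), Δ;Γ ⊢ A : type, Δ;Γ,A ⊢ B : type, and Δ;Γ,A ⊢ M : B. -/
import Mathlib


namespace CMTT

/- Syntax of the explicit substitution calculus with meta-variables -/
mutual
inductive Expr : Type
  | kind : Expr
  | type : Expr
  | const : Nat → Expr
  | pi : Expr → Expr → Expr
  | var : Nat → Expr          -- x_n  (n ≥ 1)
  | mvar : Nat → Expr         -- X_n  (n ≥ 1)
  | lam : Expr → Expr
  | app : Expr → Expr → Expr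
  | clo : Expr → Sub → Expr   -- [σ]E
  | mclo : Expr → MSub → Expr -- ⟦θ⟧E
inductive Sub : Type
  | shift : Nat → Sub             -- ↑ⁿ
  | cons : Sub → Expr → Sub       -- (σ, M)
  | comp : Sub → Sub → Sub        -- comp σ τ  =  [σ]τ
  | mclo : MSub → Sub → Sub       -- ⟦θ⟧σ
inductive MSub : Type
  | shift : Nat → MSub            -- ⇑ⁿ
  | cons : MSub → Expr → MSub     -- (θ, M)
  | comp : MSub → MSub → MSub     -- comp θ θ' = ⟦θ⟧θ'
end

def IsSort (s : Expr) : Prop := s = Expr.type ∨ s = Expr.kind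

/-- Contexts: Ψ,A is represented as A :: Ψ. -/
abbrev Ctx := List Expr
/-- Meta-contexts: Δ,(Ψ ⊢ A) is represented as (Ψ,A) :: Δ. -/
abbrev MCtx := List (Ctx × Expr)

/-- Pointwise application of a meta-substitution to a context: ⟦θ⟧Ψ. -/
def mApCtx (θ : MSub) (Ψ : Ctx) : Ctx := Ψ.map (fun A => Expr.mclo A θ)

/-- Single substitution [↑⁰, N]. -/
def sg (N : Expr) : Sub := Sub.cons (Sub.shift 0) N
/-- Lifting a substitution under a binder: ([↑¹]σ, x₁). -/
def liftS (σ : Sub) : Sub := Sub.cons (Sub.comp (Sub.shift 1) σ) (Expr.var 1)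

/- Typing and definitional equality, indexed by derivation height.
   `Sig` is the global signature assigning kinds/types to constants. -/
mutual

inductive WfMCtx (Sig : Nat → Expr) : Nat → MCtx → Prop
  | nil : WfMCtx Sig 1 []
  | cons {n Δ Ψ A} : Types Sig n Δ Ψ A Expr.type →
      WfMCtx Sig (n+1) ((Ψ, A) :: Δ)

inductive WfCtx (Sig : Nat → Expr) : Nat → MCtx → Ctx → Prop
  | nil {n Δ} : WfMCtx Sig n Δ → WfCtx Sig (n+1) Δ []
  | cons {n Δ Ψ A} : Types Sig n Δ Ψ A Expr.type →
      WfCtx Sig (n+1) Δ (A :: Ψ)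

inductive Types (Sig : Nat → Expr) : Nat → MCtx → Ctx → Expr → Expr → Prop
  | type {n Δ Γ} : WfCtx Sig n Δ Γ →
      Types Sig (n+1) Δ Γ Expr.type Expr.kind
  | const {n Δ Γ a} : WfCtx Sig n Δ Γ →
      Types Sig (n+1) Δ Γ (Expr.const a) (Sig a)
  | pi {n Δ Γ A E s} : IsSort s → Types Sig n Δ (A :: Γ) E s →
      Types Sig (n+1) Δ Γ (Expr.pi A E) s
  | var1 {n Δ Γ A} : Types Sig n Δ Γ A Expr.type →
      Types Sig (n+1) Δ (A :: Γ) (Expr.var 1) (Expr.clo A (Sub.shift 1))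
  | varS {n1 n2 Δ Γ m A B} : Types Sig n1 Δ Γ (Expr.var m) A →
      Types Sig n2 Δ Γ B Expr.type →
      Types Sig (max n1 n2 + 1) Δ (B :: Γ) (Expr.var (m+1)) (Expr.clo A (Sub.shift 1))
  | mvar1 {n Δ Γ A} : Types Sig n Δ Γ A Expr.type →
      Types Sig (n+1) ((Γ, A) :: Δ) (mApCtx (MSub.shift 1) Γ) (Expr.mvar 1) (Expr.mclo A (MSub.shift 1))
  | mvarS {n1 n2 Δ Γ Γ' m A A'} : Types Sig n1 Δ Γ (Expr.mvar m) A →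
      Types Sig n2 Δ Γ' A' Expr.type →
      Types Sig (max n1 n2 + 1) ((Γ', A') :: Δ) (mApCtx (MSub.shift 1) Γ) (Expr.mvar (m+1)) (Expr.mclo A (MSub.shift 1))
  | lam {n1 n2 Δ Γ A M B} : Types Sig n1 Δ (A :: Γ) M B →
      Types Sig n2 Δ (A :: Γ) B Expr.type →
      Types Sig (max n1 n2 + 1) Δ Γ (Expr.lam M) (Expr.pi A B)
  | app {n1 n2 Δ Γ E A F N} : Types Sig n1 Δ Γ E (Expr.pi A F) →
      Types Sig n2 Δ Γ N A →
      Types Sig (max n1 n2 + 1) Δ Γ (Expr.app E N) (Expr.clo F (sg N))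
  | cloKind {n1 n2 Δ Γ σ Ψ E} : SubTy Sig n1 Δ Γ σ Ψ →
      Types Sig n2 Δ Ψ E Expr.kind →
      Types Sig (max n1 n2 + 1) Δ Γ (Expr.clo E σ) Expr.kind
  | clo {n1 n2 Δ Γ σ Ψ E F} : SubTy Sig n1 Δ Γ σ Ψ →
      Types Sig n2 Δ Ψ E F →
      Types Sig (max n1 n2 + 1) Δ Γ (Expr.clo E σ) (Expr.clo F σ)
  | mcloKind {n1 n2 Δ Δ' θ Γ E} : MSubTy Sig n1 Δ θ Δ' →
      Types Sig n2 Δ' Γ E Expr.kind →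
      Types Sig (max n1 n2 + 1) Δ (mApCtx θ Γ) (Expr.mclo E θ) Expr.kind
  | mclo {n1 n2 Δ Δ' θ Γ E F} : MSubTy Sig n1 Δ θ Δ' →
      Types Sig n2 Δ' Γ E F →
      Types Sig (max n1 n2 + 1) Δ (mApCtx θ Γ) (Expr.mclo E θ) (Expr.mclo F θ)
  | conv {n1 n2 Δ Γ E F1 F2 s} : Types Sig n1 Δ Γ E F1 → IsSort s →
      EqE Sig n2 Δ Γ F1 F2 s →
      Types Sig (max n1 n2 + 1) Δ Γ E F2

inductive SubTy (Sig : Nat → Expr) : Nat → MCtx → Ctx → Sub → Ctx → Prop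
  | shift {n Δ Ψ Γ'} : WfCtx Sig n Δ (Γ' ++ Ψ) →
      SubTy Sig (n+1) Δ (Γ' ++ Ψ) (Sub.shift Γ'.length) Ψ
  | cons {n1 n2 n3 Δ Γ σ Ψ A M} : SubTy Sig n1 Δ Γ σ Ψ →
      Types Sig n2 Δ Ψ A Expr.type →
      Types Sig n3 Δ Γ M (Expr.clo A σ) →
      SubTy Sig (max n1 (max n2 n3) + 1) Δ Γ (Sub.cons σ M) (A :: Ψ)
  | comp {n1 n2 Δ Γ σ Ψ' τ Ψ} : SubTy Sig n1 Δ Γ σ Ψ' →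
      SubTy Sig n2 Δ Ψ' τ Ψ →
      SubTy Sig (max n1 n2 + 1) Δ Γ (Sub.comp σ τ) Ψ
  | mclo {n1 n2 Δ Δ' θ Γ σ Ψ} : MSubTy Sig n1 Δ θ Δ' →
      SubTy Sig n2 Δ' Γ σ Ψ →
      SubTy Sig (max n1 n2 + 1) Δ (mApCtx θ Γ) (Sub.mclo θ σ) (mApCtx θ Ψ)

inductive MSubTy (Sig : Nat → Expr) : Nat → MCtx → MSub → MCtx → Prop
  | shift {n Δ Δ'} : WfMCtx Sig n (Δ' ++ Δ) →
      MSubTy Sig (n+1) (Δ' ++ Δ) (MSub.shift Δ'.length) Δ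
  | cons {n1 n2 n3 Δ θ Δ' Γ A M} : MSubTy Sig n1 Δ θ Δ' →
      Types Sig n2 Δ' Γ A Expr.type →
      Types Sig n3 Δ (mApCtx θ Γ) M (Expr.mclo A θ) →
      MSubTy Sig (max n1 (max n2 n3) + 1) Δ (MSub.cons θ M) ((Γ, A) :: Δ')
  | comp {n1 n2 Δ θ Δ0 θ' Δ'} : MSubTy Sig n1 Δ θ Δ0 →
      MSubTy Sig n2 Δ0 θ' Δ' →
      MSubTy Sig (max n1 n2 + 1) Δ (MSub.comp θ θ') Δ'

inductive EqE (Sig : Nat → Expr) : Nat → MCtx → Ctx → Expr → Expr → Expr → Prop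
  /- congruence rules -/
  | type {n Δ Γ} : WfCtx Sig n Δ Γ →
      EqE Sig (n+1) Δ Γ Expr.type Expr.type Expr.kind
  | const {n Δ Γ a} : WfCtx Sig n Δ Γ →
      EqE Sig (n+1) Δ Γ (Expr.const a) (Expr.const a) (Sig a)
  | pi {n1 n2 Δ Γ A A' E E' s} : IsSort s → EqE Sig n1 Δ Γ A A' Expr.type →
      EqE Sig n2 Δ (A :: Γ) E E' s →
      EqE Sig (max n1 n2 + 1) Δ Γ (Expr.pi A E) (Expr.pi A' E') s
  | var {n Δ Γ m A} : Types Sig n Δ Γ (Expr.var m) A →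
      EqE Sig (n+1) Δ Γ (Expr.var m) (Expr.var m) A
  | mvar {n Δ Γ m A} : Types Sig n Δ Γ (Expr.mvar m) A →
      EqE Sig (n+1) Δ Γ (Expr.mvar m) (Expr.mvar m) A
  | lam {n1 n2 Δ Γ A M M' B} : EqE Sig n1 Δ (A :: Γ) M M' B →
      Types Sig n2 Δ (A :: Γ) B Expr.type →
      EqE Sig (max n1 n2 + 1) Δ Γ (Expr.lam M) (Expr.lam M') (Expr.pi A B)
  | app {n1 n2 Δ Γ E E' A F N N'} : EqE Sig n1 Δ Γ E E' (Expr.pi A F) →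
      EqE Sig n2 Δ Γ N N' A →
      EqE Sig (max n1 n2 + 1) Δ Γ (Expr.app E N) (Expr.app E' N') (Expr.clo F (sg N))
  | clo {n1 n2 Δ Γ σ σ' Ψ E E' F} : EqS Sig n1 Δ Γ σ σ' Ψ →
      EqE Sig n2 Δ Ψ E E' F →
      EqE Sig (max n1 n2 + 1) Δ Γ (Expr.clo E σ) (Expr.clo E' σ') (Expr.clo F σ)
  | cloKind {n1 n2 Δ Γ σ σ' Ψ E E'} : EqS Sig n1 Δ Γ σ σ' Ψ →
      EqE Sig n2 Δ Ψ E E' Expr.kind →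
      EqE Sig (max n1 n2 + 1) Δ Γ (Expr.clo E σ) (Expr.clo E' σ') Expr.kind
  | mclo {n1 n2 Δ Δ' θ θ' Γ E E' F} : EqM Sig n1 Δ θ θ' Δ' →
      EqE Sig n2 Δ' Γ E E' F →
      EqE Sig (max n1 n2 + 1) Δ (mApCtx θ Γ) (Expr.mclo E θ) (Expr.mclo E' θ') (Expr.mclo F θ)
  | mcloKind {n1 n2 Δ Δ' θ θ' Γ E E'} : EqM Sig n1 Δ θ θ' Δ' →
      EqE Sig n2 Δ' Γ E E' Expr.kind →
      EqE Sig (max n1 n2 + 1) Δ (mApCtx θ Γ) (Expr.mclo E θ) (Expr.mclo E' θ') Expr.kind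
  | symm {n Δ Γ E E' F} : EqE Sig n Δ Γ E E' F → EqE Sig (n+1) Δ Γ E' E F
  | trans {n1 n2 Δ Γ E E' E'' F} : EqE Sig n1 Δ Γ E E' F → EqE Sig n2 Δ Γ E' E'' F →
      EqE Sig (max n1 n2 + 1) Δ Γ E E'' F
  | conv {n1 n2 Δ Γ E E' F F' s} : EqE Sig n1 Δ Γ E E' F → IsSort s →
      EqE Sig n2 Δ Γ F F' s →
      EqE Sig (max n1 n2 + 1) Δ Γ E E' F'
  /- β-reduction -/
  | beta {n1 n2 n3 Δ Γ A M B N} : Types Sig n1 Δ (A :: Γ) M B →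
      Types Sig n2 Δ (A :: Γ) B Expr.type →
      Types Sig n3 Δ Γ N A →
      EqE Sig (max n1 (max n2 n3) + 1) Δ Γ (Expr.app (Expr.lam M) N) (Expr.clo M (sg N)) (Expr.clo B (sg N))
  /- substitution propagation: identity and composition -/
  | subId {n Δ Γ E F} : Types Sig n Δ Γ E F →
      EqE Sig (n+1) Δ Γ (Expr.clo E (Sub.shift 0)) E F
  | subComp {n1 n2 n3 Δ Γ σ Γ' τ Ψ E F} : SubTy Sig n1 Δ Γ σ Γ' →
      SubTy Sig n2 Δ Γ' τ Ψ → Types Sig n3 Δ Ψ E F →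
      EqE Sig (max n1 (max n2 n3) + 1) Δ Γ (Expr.clo (Expr.clo E τ) σ)
        (Expr.clo E (Sub.comp σ τ)) (Expr.clo F (Sub.comp σ τ))
  /- substitution propagation: constants -/
  | subType {n Δ Γ σ Ψ} : SubTy Sig n Δ Γ σ Ψ →
      EqE Sig (n+1) Δ Γ (Expr.clo Expr.type σ) Expr.type Expr.kind
  | subConst {n1 n2 Δ Γ σ Ψ a K} : SubTy Sig n1 Δ Γ σ Ψ →
      Types Sig n2 Δ Ψ (Expr.const a) K →
      EqE Sig (max n1 n2 + 1) Δ Γ (Expr.clo (Expr.const a) σ) (Expr.const a) (Expr.clo K σ)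
  /- substitution propagation: variable lookup -/
  | subVar1 {n1 n2 n3 Δ Γ σ Ψ A M} : SubTy Sig n1 Δ Γ σ Ψ →
      Types Sig n2 Δ Ψ A Expr.type →
      Types Sig n3 Δ Γ M (Expr.clo A σ) →
      EqE Sig (max n1 (max n2 n3) + 1) Δ Γ (Expr.clo (Expr.var 1) (Sub.cons σ M)) M (Expr.clo A σ)
  | varShift {n Δ Γ m A} : Types Sig n Δ Γ (Expr.var (m+1)) A →
      EqE Sig (n+1) Δ Γ (Expr.var (m+1)) (Expr.clo (Expr.var m) (Sub.shift 1)) A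
  /- substitution propagation: pushing into expressions -/
  | subPi {n1 n2 Δ Γ σ Ψ A F s} : SubTy Sig n1 Δ Γ σ Ψ → IsSort s →
      Types Sig n2 Δ (A :: Ψ) F s →
      EqE Sig (max n1 n2 + 1) Δ Γ (Expr.clo (Expr.pi A F) σ)
        (Expr.pi (Expr.clo A σ) (Expr.clo F (liftS σ))) s
  | subLam {n1 n2 n3 Δ Γ σ Ψ A M B} : SubTy Sig n1 Δ Γ σ Ψ →
      Types Sig n2 Δ (A :: Ψ) M B →
      Types Sig n3 Δ (A :: Ψ) B Expr.type →
      EqE Sig (max n1 (max n2 n3) + 1) Δ Γ (Expr.clo (Expr.lam M) σ)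
        (Expr.lam (Expr.clo M (liftS σ)))
        (Expr.pi (Expr.clo A σ) (Expr.clo B (liftS σ)))
  | subApp {n1 n2 n3 Δ Γ σ Ψ E A F N} : SubTy Sig n1 Δ Γ σ Ψ →
      Types Sig n2 Δ Ψ E (Expr.pi A F) →
      Types Sig n3 Δ Ψ N A →
      EqE Sig (max n1 (max n2 n3) + 1) Δ Γ (Expr.clo (Expr.app E N) σ)
        (Expr.app (Expr.clo E σ) (Expr.clo N σ)) (Expr.clo F (Sub.cons σ (Expr.clo N σ)))
  /- meta-substitution propagation: identity and composition -/
  | msubId {n Δ Γ E F} : Types Sig n Δ Γ E F →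
      EqE Sig (n+1) Δ Γ (Expr.mclo E (MSub.shift 0)) E F
  | msubComp {n1 n2 n3 Δ θ Δ' θ' Δ'' Γ E F} : MSubTy Sig n1 Δ θ Δ' →
      MSubTy Sig n2 Δ' θ' Δ'' → Types Sig n3 Δ'' Γ E F →
      EqE Sig (max n1 (max n2 n3) + 1) Δ (mApCtx (MSub.comp θ θ') Γ)
        (Expr.mclo (Expr.mclo E θ') θ) (Expr.mclo E (MSub.comp θ θ'))
        (Expr.mclo F (MSub.comp θ θ'))
  /- meta-substitution propagation: constants and ordinary variables -/
  | msubType {n1 n2 Δ θ Δ' Γ} : MSubTy Sig n1 Δ θ Δ' → WfCtx Sig n2 Δ' Γ →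
      EqE Sig (max n1 n2 + 1) Δ (mApCtx θ Γ) (Expr.mclo Expr.type θ) Expr.type Expr.kind
  | msubConst {n1 n2 Δ θ Δ' Γ a K} : MSubTy Sig n1 Δ θ Δ' →
      Types Sig n2 Δ' Γ (Expr.const a) K →
      EqE Sig (max n1 n2 + 1) Δ (mApCtx θ Γ) (Expr.mclo (Expr.const a) θ) (Expr.const a) (Expr.mclo K θ)
  | msubVar {n1 n2 Δ θ Δ' Γ m A} : MSubTy Sig n1 Δ θ Δ' →
      Types Sig n2 Δ' Γ (Expr.var m) A →
      EqE Sig (max n1 n2 + 1) Δ (mApCtx θ Γ) (Expr.mclo (Expr.var m) θ) (Expr.var m) (Expr.mclo A θ)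
  /- meta-substitution propagation: meta-variable lookup -/
  | msubMvar1 {n1 n2 n3 Δ θ Δ' Γ A M} : MSubTy Sig n1 Δ θ Δ' →
      Types Sig n2 Δ' Γ A Expr.type →
      Types Sig n3 Δ (mApCtx θ Γ) M (Expr.mclo A θ) →
      EqE Sig (max n1 (max n2 n3) + 1) Δ (mApCtx θ Γ)
        (Expr.mclo (Expr.mvar 1) (MSub.cons θ M)) M (Expr.mclo A θ)
  | mvarShift {n Δ Γ m A} : Types Sig n Δ Γ (Expr.mvar (m+1)) A →
      EqE Sig (n+1) Δ Γ (Expr.mvar (m+1)) (Expr.mclo (Expr.mvar m) (MSub.shift 1)) A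
  /- meta-substitution propagation: pushing into expressions -/
  | msubPi {n1 n2 Δ θ Δ' Γ A F s} : MSubTy Sig n1 Δ θ Δ' → IsSort s →
      Types Sig n2 Δ' (A :: Γ) F s →
      EqE Sig (max n1 n2 + 1) Δ (mApCtx θ Γ) (Expr.mclo (Expr.pi A F) θ)
        (Expr.pi (Expr.mclo A θ) (Expr.mclo F θ)) s
  | msubLam {n1 n2 n3 Δ θ Δ' Γ A M B} : MSubTy Sig n1 Δ θ Δ' →
      Types Sig n2 Δ' (A :: Γ) M B →
      Types Sig n3 Δ' (A :: Γ) B Expr.type →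
      EqE Sig (max n1 (max n2 n3) + 1) Δ (mApCtx θ Γ) (Expr.mclo (Expr.lam M) θ)
        (Expr.lam (Expr.mclo M θ)) (Expr.pi (Expr.mclo A θ) (Expr.mclo B θ))
  | msubApp {n1 n2 n3 Δ θ Δ' Γ E A F N} : MSubTy Sig n1 Δ θ Δ' →
      Types Sig n2 Δ' Γ E (Expr.pi A F) →
      Types Sig n3 Δ' Γ N A →
      EqE Sig (max n1 (max n2 n3) + 1) Δ (mApCtx θ Γ) (Expr.mclo (Expr.app E N) θ)
        (Expr.app (Expr.mclo E θ) (Expr.mclo N θ))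
        (Expr.clo (Expr.mclo F θ) (sg (Expr.mclo N θ)))
  | msubClo {n1 n2 n3 Δ θ Δ' Γ σ Ψ E F} : MSubTy Sig n1 Δ θ Δ' →
      SubTy Sig n2 Δ' Γ σ Ψ → Types Sig n3 Δ' Ψ E F →
      EqE Sig (max n1 (max n2 n3) + 1) Δ (mApCtx θ Γ) (Expr.mclo (Expr.clo E σ) θ)
        (Expr.clo (Expr.mclo E θ) (Sub.mclo θ σ)) (Expr.clo (Expr.mclo F θ) (Sub.mclo θ σ))
  /- extensionality (η) -/
  | etaLam {n Δ Γ M A B} : Types Sig n Δ Γ M (Expr.pi A B) →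
      EqE Sig (n+1) Δ Γ M (Expr.lam (Expr.app (Expr.clo M (Sub.shift 1)) (Expr.var 1))) (Expr.pi A B)

inductive EqS (Sig : Nat → Expr) : Nat → MCtx → Ctx → Sub → Sub → Ctx → Prop
  /- congruence -/
  | shift {n Δ Ψ Γ'} : WfCtx Sig n Δ (Γ' ++ Ψ) →
      EqS Sig (n+1) Δ (Γ' ++ Ψ) (Sub.shift Γ'.length) (Sub.shift Γ'.length) Ψ
  | cons {n1 n2 n3 Δ Γ σ σ' Ψ A M M'} : EqE Sig n1 Δ Γ M M' (Expr.clo A σ) →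
      Types Sig n2 Δ Ψ A Expr.type →
      EqS Sig n3 Δ Γ σ σ' Ψ →
      EqS Sig (max n1 (max n2 n3) + 1) Δ Γ (Sub.cons σ M) (Sub.cons σ' M') (A :: Ψ)
  | comp {n1 n2 Δ Γ σ σ' Ψ' τ τ' Ψ} : EqS Sig n1 Δ Γ σ σ' Ψ' →
      EqS Sig n2 Δ Ψ' τ τ' Ψ →
      EqS Sig (max n1 n2 + 1) Δ Γ (Sub.comp σ τ) (Sub.comp σ' τ') Ψ
  | mclo {n1 n2 Δ θ θ' Δ' Γ σ σ' Ψ} : EqM Sig n1 Δ θ θ' Δ' →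
      EqS Sig n2 Δ' Γ σ σ' Ψ →
      EqS Sig (max n1 n2 + 1) Δ (mApCtx θ Γ) (Sub.mclo θ σ) (Sub.mclo θ' σ') (mApCtx θ Ψ)
  | symm {n Δ Γ σ σ' Ψ} : EqS Sig n Δ Γ σ σ' Ψ → EqS Sig (n+1) Δ Γ σ' σ Ψ
  | trans {n1 n2 Δ Γ σ σ' σ'' Ψ} : EqS Sig n1 Δ Γ σ σ' Ψ → EqS Sig n2 Δ Γ σ' σ'' Ψ →
      EqS Sig (max n1 n2 + 1) Δ Γ σ σ'' Ψ
  /- substitution reductions: pairing and shifting -/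
  | shiftPair {n Δ Γ σ M Ψ Ψ' A k} : SubTy Sig n Δ Γ (Sub.cons σ M) (A :: (Ψ' ++ Ψ)) →
      Ψ'.length = k →
      EqS Sig (n+1) Δ Γ (Sub.comp (Sub.cons σ M) (Sub.shift (k+1))) (Sub.comp σ (Sub.shift k)) Ψ
  | consComp {n1 n2 Δ Γ σ Ψ' τ M Ψ A} : SubTy Sig n1 Δ Γ σ Ψ' →
      SubTy Sig n2 Δ Ψ' (Sub.cons τ M) (A :: Ψ) →
      EqS Sig (max n1 n2 + 1) Δ Γ (Sub.comp σ (Sub.cons τ M))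
        (Sub.cons (Sub.comp σ τ) (Expr.clo M σ)) (A :: Ψ)
  | shiftShift {n Δ Γ Γ1 Γ2 m k} : WfCtx Sig n Δ (Γ2 ++ Γ1 ++ Γ) →
      Γ1.length = m → Γ2.length = k →
      EqS Sig (n+1) Δ (Γ2 ++ Γ1 ++ Γ) (Sub.comp (Sub.shift k) (Sub.shift m)) (Sub.shift (k+m)) Γ
  /- category laws -/
  | idL {n Δ Γ σ Ψ} : SubTy Sig n Δ Γ σ Ψ →
      EqS Sig (n+1) Δ Γ (Sub.comp (Sub.shift 0) σ) σ Ψ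
  | idR {n Δ Γ σ Ψ} : SubTy Sig n Δ Γ σ Ψ →
      EqS Sig (n+1) Δ Γ (Sub.comp σ (Sub.shift 0)) σ Ψ
  | assoc {n1 n2 n3 Δ Γ1 σ1 Γ2 σ2 Γ3 σ3 Γ4} : SubTy Sig n1 Δ Γ1 σ1 Γ2 →
      SubTy Sig n2 Δ Γ2 σ2 Γ3 → SubTy Sig n3 Δ Γ3 σ3 Γ4 →
      EqS Sig (max n1 (max n2 n3) + 1) Δ Γ1 (Sub.comp σ1 (Sub.comp σ2 σ3))
        (Sub.comp (Sub.comp σ1 σ2) σ3) Γ4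
  /- meta-substitution propagation into ordinary substitutions -/
  | mshift {n1 n2 Δ θ Δ' Γ Γ' k} : MSubTy Sig n1 Δ θ Δ' →
      WfCtx Sig n2 Δ' (Γ' ++ Γ) → Γ'.length = k →
      EqS Sig (max n1 n2 + 1) Δ (mApCtx θ (Γ' ++ Γ)) (Sub.mclo θ (Sub.shift k)) (Sub.shift k) (mApCtx θ Γ)
  | mcons {n1 n2 n3 n4 Δ θ Δ' Γ σ Ψ A M} : MSubTy Sig n1 Δ θ Δ' →
      SubTy Sig n2 Δ' Γ σ Ψ →
      Types Sig n3 Δ' Ψ A Expr.type →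
      Types Sig n4 Δ' Γ M (Expr.clo A σ) →
      EqS Sig (max n1 (max n2 (max n3 n4)) + 1) Δ (mApCtx θ Γ) (Sub.mclo θ (Sub.cons σ M))
        (Sub.cons (Sub.mclo θ σ) (Expr.mclo M θ)) (Expr.mclo A θ :: mApCtx θ Ψ)
  | mcomp {n1 n2 n3 Δ θ Δ' Γ τ Ψ' σ Ψ} : MSubTy Sig n1 Δ θ Δ' →
      SubTy Sig n2 Δ' Γ τ Ψ' → SubTy Sig n3 Δ' Ψ' σ Ψ →
      EqS Sig (max n1 (max n2 n3) + 1) Δ (mApCtx θ Γ) (Sub.mclo θ (Sub.comp τ σ))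
        (Sub.comp (Sub.mclo θ τ) (Sub.mclo θ σ)) (mApCtx θ Ψ)
  | mmclo {n1 n2 n3 Δ θ Δ' θ' Δ'' Γ σ Ψ} : MSubTy Sig n1 Δ θ Δ' →
      MSubTy Sig n2 Δ' θ' Δ'' → SubTy Sig n3 Δ'' Γ σ Ψ →
      EqS Sig (max n1 (max n2 n3) + 1) Δ (mApCtx (MSub.comp θ θ') Γ)
        (Sub.mclo θ (Sub.mclo θ' σ)) (Sub.mclo (MSub.comp θ θ') σ) (mApCtx (MSub.comp θ θ') Ψ)
  /- extensionality (η) for substitutions -/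
  | eta {n Δ Γ A Γ' k} : WfCtx Sig n Δ (Γ' ++ A :: Γ) → Γ'.length = k →
      EqS Sig (n+1) Δ (Γ' ++ A :: Γ) (Sub.shift k)
        (Sub.cons (Sub.shift (k+1)) (Expr.var (k+1))) (A :: Γ)

inductive EqM (Sig : Nat → Expr) : Nat → MCtx → MSub → MSub → MCtx → Prop
  /- congruence -/
  | shift {n Δ Δ'} : WfMCtx Sig n (Δ' ++ Δ) →
      EqM Sig (n+1) (Δ' ++ Δ) (MSub.shift Δ'.length) (MSub.shift Δ'.length) Δ
  | cons {n1 n2 n3 Δ θ θ' Δ' Γ A M M'} : EqM Sig n1 Δ θ θ' Δ' →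
      Types Sig n2 Δ' Γ A Expr.type →
      EqE Sig n3 Δ (mApCtx θ Γ) M M' (Expr.mclo A θ) →
      EqM Sig (max n1 (max n2 n3) + 1) Δ (MSub.cons θ M) (MSub.cons θ' M') ((Γ, A) :: Δ')
  | comp {n1 n2 Δ θ θ' Δ0 τ τ' Δ'} : EqM Sig n1 Δ θ θ' Δ0 →
      EqM Sig n2 Δ0 τ τ' Δ' →
      EqM Sig (max n1 n2 + 1) Δ (MSub.comp θ τ) (MSub.comp θ' τ') Δ'
  | symm {n Δ θ θ' Δ'} : EqM Sig n Δ θ θ' Δ' → EqM Sig (n+1) Δ θ' θ Δ'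
  | trans {n1 n2 Δ θ θ' θ'' Δ'} : EqM Sig n1 Δ θ θ' Δ' → EqM Sig n2 Δ θ' θ'' Δ' →
      EqM Sig (max n1 n2 + 1) Δ θ θ'' Δ'
  /- meta-substitution reductions: pairing and shifting -/
  | shiftPair {n Δ θ M Δ0 Δ0' Γ A k} : MSubTy Sig n Δ (MSub.cons θ M) ((Γ, A) :: (Δ0' ++ Δ0)) →
      Δ0'.length = k →
      EqM Sig (n+1) Δ (MSub.comp (MSub.cons θ M) (MSub.shift (k+1))) (MSub.comp θ (MSub.shift k)) Δ0
  | consComp {n1 n2 Δ θ Δ0' θ' M Δ0 Γ A} : MSubTy Sig n1 Δ θ Δ0' →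
      MSubTy Sig n2 Δ0' (MSub.cons θ' M) ((Γ, A) :: Δ0) →
      EqM Sig (max n1 n2 + 1) Δ (MSub.comp θ (MSub.cons θ' M))
        (MSub.cons (MSub.comp θ θ') (Expr.mclo M θ)) ((Γ, A) :: Δ0)
  | shiftShift {n Δ Δ1 Δ2 m k} : WfMCtx Sig n (Δ2 ++ Δ1 ++ Δ) →
      Δ1.length = m → Δ2.length = k →
      EqM Sig (n+1) (Δ2 ++ Δ1 ++ Δ) (MSub.comp (MSub.shift k) (MSub.shift m)) (MSub.shift (k+m)) Δ
  /- category laws -/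
  | idL {n Δ θ Δ0} : MSubTy Sig n Δ θ Δ0 →
      EqM Sig (n+1) Δ (MSub.comp (MSub.shift 0) θ) θ Δ0
  | idR {n Δ θ Δ0} : MSubTy Sig n Δ θ Δ0 →
      EqM Sig (n+1) Δ (MSub.comp θ (MSub.shift 0)) θ Δ0
  | assoc {n1 n2 n3 Δ1 θ1 Δ2 θ2 Δ3 θ3 Δ4} : MSubTy Sig n1 Δ1 θ1 Δ2 →
      MSubTy Sig n2 Δ2 θ2 Δ3 → MSubTy Sig n3 Δ3 θ3 Δ4 →
      EqM Sig (max n1 (max n2 n3) + 1) Δ1 (MSub.comp θ1 (MSub.comp θ2 θ3))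
        (MSub.comp (MSub.comp θ1 θ2) θ3) Δ4
  /- extensionality (η) for meta-substitutions -/
  | eta {n Δ Γ A Δ' k} : WfMCtx Sig n (Δ' ++ (Γ, A) :: Δ) → Δ'.length = k →
      EqM Sig (n+1) (Δ' ++ (Γ, A) :: Δ) (MSub.shift k)
        (MSub.cons (MSub.shift (k+1)) (Expr.mvar (k+1))) ((Γ, A) :: Δ)

end

/- Height-erased (plain) judgements: derivability. -/
def WfMCtx' (Sig : Nat → Expr) (Δ : MCtx) : Prop := ∃ n, WfMCtx Sig n Δ
def WfCtx' (Sig : Nat → Expr) (Δ : MCtx) (Γ : Ctx) : Prop := ∃ n, WfCtx Sig n Δ Γ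
def HasType (Sig : Nat → Expr) (Δ : MCtx) (Γ : Ctx) (E F : Expr) : Prop := ∃ n, Types Sig n Δ Γ E F
def SubTyped (Sig : Nat → Expr) (Δ : MCtx) (Γ : Ctx) (σ : Sub) (Ψ : Ctx) : Prop := ∃ n, SubTy Sig n Δ Γ σ Ψ
def MSubTyped (Sig : Nat → Expr) (Δ : MCtx) (θ : MSub) (Δ' : MCtx) : Prop := ∃ n, MSubTy Sig n Δ θ Δ'
def EqExpr (Sig : Nat → Expr) (Δ : MCtx) (Γ : Ctx) (E E' F : Expr) : Prop := ∃ n, EqE Sig n Δ Γ E E' F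
def EqSub (Sig : Nat → Expr) (Δ : MCtx) (Γ : Ctx) (σ σ' : Sub) (Ψ : Ctx) : Prop := ∃ n, EqS Sig n Δ Γ σ σ' Ψ
def EqMSub (Sig : Nat → Expr) (Δ : MCtx) (θ θ' : MSub) (Δ' : MCtx) : Prop := ∃ n, EqM Sig n Δ θ θ' Δ'

end CMTT
namespace CMTT

/- Weak head normal forms, closures, environments -/
inductive MEnv : Type
  | shift : Nat → MEnv            -- ⇑ⁿ
  | cons : MEnv → Expr → MEnv     -- (η, M)

mutual
inductive Clos : Type
  | var : Nat → Clos              -- xₙ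
  | clo : Env → MEnv → Expr → Clos -- [ρ]⟦η⟧E
inductive Env : Type
  | shift : Nat → Env             -- ↑ⁿ
  | cons : Env → Clos → Env       -- (ρ, L)
  | shiftc : Nat → Env → Env      -- [↑ⁿ]ρ
end

def MEnv.toMSub : MEnv → MSub
  | .shift n => .shift n
  | .cons η M => .cons η.toMSub M

mutual
def Clos.toExpr : Clos → Expr
  | .var n => .var n
  | .clo ρ η E => Expr.clo (Expr.mclo E η.toMSub) ρ.toSub
def Env.toSub : Env → Sub
  | .shift n => .shift n
  | .cons ρ L => Sub.cons ρ.toSub L.toExpr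
  | .shiftc n ρ => Sub.comp (Sub.shift n) ρ.toSub
end

/- Neutral and general weak head normal forms -/
inductive Ne : Type
  | const : Nat → Ne
  | var : Nat → Ne
  | mvarClo : Env → Nat → Ne      -- [ρ]Xₘ
  | app : Ne → Clos → Ne

inductive Whnf : Type
  | kind : Whnf
  | type : Whnf
  | pi : Env → MEnv → Expr → Expr → Whnf   -- [ρ]⟦η⟧(Π A. B)
  | lam : Env → MEnv → Expr → Whnf         -- [ρ]⟦η⟧(λ M)
  | ne : Ne → Whnf

def Ne.toExpr : Ne → Expr
  | .const a => .const a
  | .var m => .var m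
  | .mvarClo ρ m => Expr.clo (Expr.mvar m) ρ.toSub
  | .app H L => .app H.toExpr L.toExpr

def Whnf.toExpr : Whnf → Expr
  | .kind => .kind
  | .type => .type
  | .pi ρ η A B => Expr.clo (Expr.mclo (Expr.pi A B) η.toMSub) ρ.toSub
  | .lam ρ η M => Expr.clo (Expr.mclo (Expr.lam M) η.toMSub) ρ.toSub
  | .ne H => H.toExpr

/-- Shifting a closure: ↑ⁿ · L. -/
def shiftClos (n : Nat) : Clos → Clos
  | .var m => .var (n + m)
  | .clo ρ η E => .clo (.shiftc n ρ) η E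

/-- Shifting a neutral weak head normal form: ↑ⁿ · H. -/
def shiftNe (n : Nat) : Ne → Ne
  | .const a => .const a
  | .var m => .var (n + m)
  | .mvarClo ρ m => .mvarClo (.shiftc n ρ) m
  | .app H L => .app (shiftNe n H) (shiftClos n L)

/-- Meta-substitution evaluation: Env(η, θ) = η'. -/
inductive MSubEval : MEnv → MSub → MEnv → Prop
  | shift {m n} : MSubEval (.shift m) (.shift n) (.shift (m+n))
  | consShift {η M n η'} : MSubEval η (.shift n) η' →
      MSubEval (.cons η M) (.shift (n+1)) η'
  | cons {η θ M η'} : MSubEval η θ η' →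
      MSubEval η (.cons θ M) (.cons η' (Expr.mclo M η.toMSub))
  | comp {η θ θ' η0 η'} : MSubEval η θ η0 → MSubEval η0 θ' η' →
      MSubEval η (.comp θ θ') η'

/-- Substitution evaluation: env(ρ, η, σ) = ρ'. -/
inductive SubEval : Env → MEnv → Sub → Env → Prop
  | shiftc {k ρ η σ ρ'} : SubEval ρ η σ ρ' →
      SubEval (.shiftc k ρ) η σ (.shiftc k ρ')
  | id {ρ η} : SubEval ρ η (Sub.shift 0) ρ
  | shift {k η n} : SubEval (.shift k) η (Sub.shift n) (.shift (k+n))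
  | consShift {ρ L η n ρ'} : SubEval ρ η (Sub.shift n) ρ' →
      SubEval (.cons ρ L) η (Sub.shift (n+1)) ρ'
  | cons {ρ η σ M ρ'} : SubEval ρ η σ ρ' →
      SubEval ρ η (Sub.cons σ M) (.cons ρ' (.clo ρ η M))
  | comp {ρ η σ τ ρ0 ρ'} : SubEval ρ η σ ρ0 → SubEval ρ0 η τ ρ' →
      SubEval ρ η (Sub.comp σ τ) ρ'
  | mclo {ρ η θ σ η' ρ'} : MSubEval η θ η' → SubEval ρ η' σ ρ' →
      SubEval ρ η (Sub.mclo θ σ) ρ'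

/-- Variable lookup: lookup(ρ, m) = L. -/
inductive LookupEval : Env → Nat → Clos → Prop
  | shift {n m} : LookupEval (.shift n) m (.var (n+m))
  | consOne {ρ L} : LookupEval (.cons ρ L) 1 L
  | consS {ρ L m L'} : LookupEval ρ m L' → LookupEval (.cons ρ L) (m+1) L'
  | shiftc {n ρ m L} : LookupEval ρ m L → LookupEval (.shiftc n ρ) m (shiftClos n L)

/-- Meta-variable lookup: mlookup(η, m) = M. -/
inductive MLookupEval : MEnv → Nat → Expr → Prop
  | shift {n m} : MLookupEval (.shift n) m (Expr.mvar (n+m))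
  | consOne {η M} : MLookupEval (.cons η M) 1 M
  | consS {η M m M'} : MLookupEval η m M' → MLookupEval (.cons η M) (m+1) M'

/- Weak head evaluation, mutually with application evaluation. -/
mutual
inductive WhnfEval : Clos → Whnf → Prop
  | var {m} : WhnfEval (.var m) (.ne (.var m))
  | kind {ρ η} : WhnfEval (.clo ρ η Expr.kind) .kind
  | type {ρ η} : WhnfEval (.clo ρ η Expr.type) .type
  | const {ρ η a} : WhnfEval (.clo ρ η (Expr.const a)) (.ne (.const a))
  | var' {ρ η m L W} : LookupEval ρ m L → WhnfEval L W →
      WhnfEval (.clo ρ η (Expr.var m)) W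
  | mvarId {ρ m} : WhnfEval (.clo ρ (.shift 0) (Expr.mvar m)) (.ne (.mvarClo ρ m))
  | mvar {ρ η m M W} : η ≠ MEnv.shift 0 → MLookupEval η m M →
      WhnfEval (.clo ρ (.shift 0) M) W →
      WhnfEval (.clo ρ η (Expr.mvar m)) W
  | pi {ρ η A B} : WhnfEval (.clo ρ η (Expr.pi A B)) (.pi ρ η A B)
  | lam {ρ η M} : WhnfEval (.clo ρ η (Expr.lam M)) (.lam ρ η M)
  | app {ρ η M N W W'} : WhnfEval (.clo ρ η M) W →
      AppEval W (.clo ρ η N) W' →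
      WhnfEval (.clo ρ η (Expr.app M N)) W'
  | clo {ρ η σ M ρ' W} : SubEval ρ η σ ρ' → WhnfEval (.clo ρ' η M) W →
      WhnfEval (.clo ρ η (Expr.clo M σ)) W
  | mclo {ρ η θ M η' W} : MSubEval η θ η' → WhnfEval (.clo ρ η' M) W →
      WhnfEval (.clo ρ η (Expr.mclo M θ)) W
inductive AppEval : Whnf → Clos → Whnf → Prop
  | beta {ρ η M L W} : WhnfEval (.clo (.cons ρ L) η M) W →
      AppEval (.lam ρ η M) L W
  | ne {H L} : AppEval (.ne H) L (.ne (.app H L))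
end

/-- Lifting an environment under a binder: ([↑¹]ρ, x₁). -/
def liftEnv (ρ : Env) : Env := .cons (.shiftc 1 ρ) (.var 1)

/- Algorithmic equality -/
mutual
inductive AlgNe : Ne → Ne → Prop
  | const {a} : AlgNe (.const a) (.const a)
  | var {m} : AlgNe (.var m) (.var m)
  | mvar {ρ ρ' m} : AlgEnv 0 0 ρ ρ' → AlgNe (.mvarClo ρ m) (.mvarClo ρ' m)
  | app {H H' L L' W W'} : AlgNe H H' → WhnfEval L W → WhnfEval L' W' →
      AlgW W W' → AlgNe (.app H L) (.app H' L')
inductive AlgW : Whnf → Whnf → Prop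
  | kind : AlgW .kind .kind
  | type : AlgW .type .type
  | pi {ρ η A B ρ' η' A' B' WA WA' WB WB'} :
      WhnfEval (.clo ρ η A) WA → WhnfEval (.clo ρ' η' A') WA' → AlgW WA WA' →
      WhnfEval (.clo (liftEnv ρ) η B) WB → WhnfEval (.clo (liftEnv ρ') η' B') WB' →
      AlgW WB WB' →
      AlgW (.pi ρ η A B) (.pi ρ' η' A' B')
  | ne {H H'} : AlgNe H H' → AlgW (.ne H) (.ne H')
  | lam {ρ η M ρ' η' M' W W'} :
      WhnfEval (.clo (liftEnv ρ) η M) W → WhnfEval (.clo (liftEnv ρ') η' M') W' →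
      AlgW W W' → AlgW (.lam ρ η M) (.lam ρ' η' M')
  | lamNe {ρ η M H W} : WhnfEval (.clo (liftEnv ρ) η M) W →
      AlgW W (.ne (.app (shiftNe 1 H) (.var 1))) →
      AlgW (.lam ρ η M) (.ne H)
  | neLam {H ρ η M W} : WhnfEval (.clo (liftEnv ρ) η M) W →
      AlgW (.ne (.app (shiftNe 1 H) (.var 1))) W →
      AlgW (.ne H) (.lam ρ η M)
inductive AlgEnv : Nat → Nat → Env → Env → Prop
  | shift {k k' n n'} : k + n = k' + n' → AlgEnv k k' (.shift n) (.shift n')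
  | shiftcL {k k' n ρ ρ'} : AlgEnv (k+n) k' ρ ρ' → AlgEnv k k' (.shiftc n ρ) ρ'
  | shiftcR {k k' n' ρ ρ'} : AlgEnv k (k'+n') ρ ρ' → AlgEnv k k' ρ (.shiftc n' ρ')
  | cons {k k' ρ ρ' L L' W W'} : AlgEnv k k' ρ ρ' →
      WhnfEval (shiftClos k L) W → WhnfEval (shiftClos k' L') W' → AlgW W W' →
      AlgEnv k k' (.cons ρ L) (.cons ρ' L')
  | etaL {k k' ρ L n' W} : AlgEnv k k' ρ (.shift (n'+1)) →
      WhnfEval (shiftClos k L) W → AlgW W (.ne (.var (k'+n'+1))) →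
      AlgEnv k k' (.cons ρ L) (.shift n')
  | etaR {k k' n ρ' L' W'} : AlgEnv k k' (.shift (n+1)) ρ' →
      WhnfEval (shiftClos k' L') W' → AlgW (.ne (.var (k+n+1))) W' →
      AlgEnv k k' (.shift n) (.cons ρ' L')
end

end CMTT
namespace CMTT
namespace LamInv

/-- Syntactic "level" of an expression (kinds ≈ 2, types ≈ 1, terms ≈ 0; kind itself 3). -/
inductive Lvl (Sig : Nat → Expr) : Expr → Nat → Prop
  | kind : Lvl Sig Expr.kind 3
  | type : Lvl Sig Expr.type 2
  | const {a i} : Lvl Sig (Sig a) (i+1) → Lvl Sig (Expr.const a) i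
  | pi {A B i} : Lvl Sig B i → Lvl Sig (Expr.pi A B) i
  | var {m} : Lvl Sig (Expr.var m) 0
  | mvar {m} : Lvl Sig (Expr.mvar m) 0
  | lam {M i} : Lvl Sig M i → Lvl Sig (Expr.lam M) i
  | app {E N i} : Lvl Sig E i → Lvl Sig (Expr.app E N) i
  | clo {E σ i} : Lvl Sig E i → Lvl Sig (Expr.clo E σ) i
  | mclo {E θ i} : Lvl Sig E i → Lvl Sig (Expr.mclo E θ) i

variable {Sig : Nat → Expr}

lemma lvl_kind {i} : Lvl Sig Expr.kind i ↔ i = 3 :=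
  ⟨fun h => by cases h; rfl, fun h => h ▸ Lvl.kind⟩
lemma lvl_type {i} : Lvl Sig Expr.type i ↔ i = 2 :=
  ⟨fun h => by cases h; rfl, fun h => h ▸ Lvl.type⟩
lemma lvl_const {a i} : Lvl Sig (Expr.const a) i ↔ Lvl Sig (Sig a) (i+1) :=
  ⟨fun h => by cases h; assumption, Lvl.const⟩
lemma lvl_pi {A B i} : Lvl Sig (Expr.pi A B) i ↔ Lvl Sig B i :=
  ⟨fun h => by cases h; assumption, Lvl.pi⟩
lemma lvl_var {m i} : Lvl Sig (Expr.var m) i ↔ i = 0 :=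
  ⟨fun h => by cases h; rfl, fun h => h ▸ Lvl.var⟩
lemma lvl_mvar {m i} : Lvl Sig (Expr.mvar m) i ↔ i = 0 :=
  ⟨fun h => by cases h; rfl, fun h => h ▸ Lvl.mvar⟩
lemma lvl_lam {M i} : Lvl Sig (Expr.lam M) i ↔ Lvl Sig M i :=
  ⟨fun h => by cases h; assumption, Lvl.lam⟩
lemma lvl_app {E N i} : Lvl Sig (Expr.app E N) i ↔ Lvl Sig E i :=
  ⟨fun h => by cases h; assumption, Lvl.app⟩
lemma lvl_clo {E σ i} : Lvl Sig (Expr.clo E σ) i ↔ Lvl Sig E i :=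
  ⟨fun h => by cases h; assumption, Lvl.clo⟩
lemma lvl_mclo {E θ i} : Lvl Sig (Expr.mclo E θ) i ↔ Lvl Sig E i :=
  ⟨fun h => by cases h; assumption, Lvl.mclo⟩

/-- The key invariant: typing raises the level by one, and definitional
equality preserves the level and has a classifier one level up. -/
lemma lvlLem (Sig : Nat → Expr) : ∀ n : Nat,
    (∀ {Δ Γ E F}, Types Sig n Δ Γ E F → ∀ i, (Lvl Sig E i ↔ Lvl Sig F (i+1)))
    ∧ (∀ {Δ Γ E E' F}, EqE Sig n Δ Γ E E' F →
        (∀ i, Lvl Sig E i ↔ Lvl Sig E' i) ∧ (∀ i, Lvl Sig E i ↔ Lvl Sig F (i+1))) := by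
  intro n
  induction n using Nat.strong_induction_on with
  | _ n ih =>
  constructor
  · intro Δ Γ E F h
    cases h with
    | type w => intro i; simp only [lvl_type, lvl_kind]; omega
    | const w => intro i; exact lvl_const
    | pi hs h1 => intro i; simp only [lvl_pi]; exact (ih _ (by omega)).1 h1 i
    | var1 h1 =>
        intro i
        have h2 := (ih _ (by omega)).1 h1 (i+1)
        simp only [lvl_type] at h2
        simp only [lvl_var, lvl_clo]
        rw [h2]; omega
    | varS h1 h2 =>
        intro i
        have h3 := (ih _ (by omega)).1 h1 i
        simp only [lvl_var, lvl_clo] at *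
        exact h3
    | mvar1 h1 =>
        intro i
        have h2 := (ih _ (by omega)).1 h1 (i+1)
        simp only [lvl_type] at h2
        simp only [lvl_mvar, lvl_mclo]
        rw [h2]; omega
    | mvarS h1 h2 =>
        intro i
        have h3 := (ih _ (by omega)).1 h1 i
        simp only [lvl_mvar, lvl_mclo] at *
        exact h3
    | lam h1 h2 => intro i; simp only [lvl_lam, lvl_pi]; exact (ih _ (by omega)).1 h1 i
    | app h1 h2 =>
        intro i
        have h3 := (ih _ (by omega)).1 h1 i
        simp only [lvl_pi] at h3
        simp only [lvl_app, lvl_clo]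
        exact h3
    | cloKind h1 h2 =>
        intro i; simp only [lvl_clo]; exact (ih _ (by omega)).1 h2 i
    | clo h1 h2 =>
        intro i; simp only [lvl_clo]; exact (ih _ (by omega)).1 h2 i
    | mcloKind h1 h2 =>
        intro i; simp only [lvl_mclo]; exact (ih _ (by omega)).1 h2 i
    | mclo h1 h2 =>
        intro i; simp only [lvl_mclo]; exact (ih _ (by omega)).1 h2 i
    | conv h1 hs h2 =>
        intro i
        exact ((ih _ (by omega)).1 h1 i).trans (((ih _ (by omega)).2 h2).1 (i+1))
  · intro Δ Γ E E' F h
    cases h with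
    | type w => exact ⟨fun i => Iff.rfl, fun i => by simp only [lvl_type, lvl_kind]; omega⟩
    | const w => exact ⟨fun i => Iff.rfl, fun i => lvl_const⟩
    | pi hs h1 h2 =>
        refine ⟨fun i => ?_, fun i => ?_⟩
        · simp only [lvl_pi]; exact ((ih _ (by omega)).2 h2).1 i
        · simp only [lvl_pi]; exact ((ih _ (by omega)).2 h2).2 i
    | var h1 => exact ⟨fun i => Iff.rfl, fun i => (ih _ (by omega)).1 h1 i⟩
    | mvar h1 => exact ⟨fun i => Iff.rfl, fun i => (ih _ (by omega)).1 h1 i⟩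
    | lam h1 h2 =>
        refine ⟨fun i => ?_, fun i => ?_⟩
        · simp only [lvl_lam]; exact ((ih _ (by omega)).2 h1).1 i
        · simp only [lvl_lam, lvl_pi]; exact ((ih _ (by omega)).2 h1).2 i
    | app h1 h2 =>
        refine ⟨fun i => ?_, fun i => ?_⟩
        · simp only [lvl_app]; exact ((ih _ (by omega)).2 h1).1 i
        · have h3 := ((ih _ (by omega)).2 h1).2 i
          simp only [lvl_pi] at h3
          simp only [lvl_app, lvl_clo]; exact h3
    | clo h1 h2 =>
        refine ⟨fun i => ?_, fun i => ?_⟩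
        · simp only [lvl_clo]; exact ((ih _ (by omega)).2 h2).1 i
        · simp only [lvl_clo]; exact ((ih _ (by omega)).2 h2).2 i
    | cloKind h1 h2 =>
        refine ⟨fun i => ?_, fun i => ?_⟩
        · simp only [lvl_clo]; exact ((ih _ (by omega)).2 h2).1 i
        · simp only [lvl_clo]; exact ((ih _ (by omega)).2 h2).2 i
    | mclo h1 h2 =>
        refine ⟨fun i => ?_, fun i => ?_⟩
        · simp only [lvl_mclo]; exact ((ih _ (by omega)).2 h2).1 i
        · simp only [lvl_mclo]; exact ((ih _ (by omega)).2 h2).2 i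
    | mcloKind h1 h2 =>
        refine ⟨fun i => ?_, fun i => ?_⟩
        · simp only [lvl_mclo]; exact ((ih _ (by omega)).2 h2).1 i
        · simp only [lvl_mclo]; exact ((ih _ (by omega)).2 h2).2 i
    | symm h1 =>
        refine ⟨fun i => (((ih _ (by omega)).2 h1).1 i).symm,
          fun i => (((ih _ (by omega)).2 h1).1 i).symm.trans (((ih _ (by omega)).2 h1).2 i)⟩
    | trans h1 h2 =>
        exact ⟨fun i => (((ih _ (by omega)).2 h1).1 i).trans (((ih _ (by omega)).2 h2).1 i),
          fun i => ((ih _ (by omega)).2 h1).2 i⟩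
    | conv h1 hs h2 =>
        exact ⟨fun i => ((ih _ (by omega)).2 h1).1 i,
          fun i => (((ih _ (by omega)).2 h1).2 i).trans (((ih _ (by omega)).2 h2).1 (i+1))⟩
    | beta h1 h2 h3 =>
        refine ⟨fun i => ?_, fun i => ?_⟩
        · simp only [lvl_app, lvl_lam, lvl_clo]
        · simp only [lvl_app, lvl_lam, lvl_clo]; exact (ih _ (by omega)).1 h1 i
    | subId h1 =>
        exact ⟨fun i => by simp only [lvl_clo], fun i => by
          simp only [lvl_clo]; exact (ih _ (by omega)).1 h1 i⟩
    | subComp h1 h2 h3 =>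
        exact ⟨fun i => by simp only [lvl_clo], fun i => by
          simp only [lvl_clo]; exact (ih _ (by omega)).1 h3 i⟩
    | subType h1 =>
        exact ⟨fun i => by simp only [lvl_clo], fun i => by
          simp only [lvl_clo, lvl_type, lvl_kind]; omega⟩
    | subConst h1 h2 =>
        exact ⟨fun i => by simp only [lvl_clo], fun i => by
          simp only [lvl_clo]; exact (ih _ (by omega)).1 h2 i⟩
    | subVar1 h1 h2 h3 =>
        have hM := (ih _ (by omega)).1 h3
        have hA := (ih _ (by omega)).1 h2
        refine ⟨fun i => ?_, fun i => ?_⟩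
        · have k1 := hM i
          have k2 := hA (i+1)
          simp only [lvl_clo] at k1
          simp only [lvl_type] at k2
          simp only [lvl_clo, lvl_var]
          rw [k1, k2]; omega
        · have k2 := hA (i+1)
          simp only [lvl_type] at k2
          simp only [lvl_clo, lvl_var]
          rw [k2]; omega
    | varShift h1 =>
        refine ⟨fun i => by simp only [lvl_clo, lvl_var], fun i => (ih _ (by omega)).1 h1 i⟩
    | subPi h1 hs h2 =>
        refine ⟨fun i => by simp only [lvl_clo, lvl_pi], fun i => ?_⟩
        simp only [lvl_clo, lvl_pi]; exact (ih _ (by omega)).1 h2 i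
    | subLam h1 h2 h3 =>
        refine ⟨fun i => by simp only [lvl_clo, lvl_lam], fun i => ?_⟩
        simp only [lvl_clo, lvl_lam, lvl_pi]; exact (ih _ (by omega)).1 h2 i
    | subApp h1 h2 h3 =>
        refine ⟨fun i => by simp only [lvl_clo, lvl_app], fun i => ?_⟩
        have k1 := (ih _ (by omega)).1 h2 i
        simp only [lvl_pi] at k1
        simp only [lvl_clo, lvl_app]; exact k1
    | msubId h1 =>
        exact ⟨fun i => by simp only [lvl_mclo], fun i => by
          simp only [lvl_mclo]; exact (ih _ (by omega)).1 h1 i⟩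
    | msubComp h1 h2 h3 =>
        exact ⟨fun i => by simp only [lvl_mclo], fun i => by
          simp only [lvl_mclo]; exact (ih _ (by omega)).1 h3 i⟩
    | msubType h1 h2 =>
        exact ⟨fun i => by simp only [lvl_mclo], fun i => by
          simp only [lvl_mclo, lvl_type, lvl_kind]; omega⟩
    | msubConst h1 h2 =>
        exact ⟨fun i => by simp only [lvl_mclo], fun i => by
          simp only [lvl_mclo]; exact (ih _ (by omega)).1 h2 i⟩
    | msubVar h1 h2 =>
        refine ⟨fun i => by simp only [lvl_mclo], fun i => ?_⟩
        have k1 := (ih _ (by omega)).1 h2 i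
        simp only [lvl_var] at k1
        simp only [lvl_mclo, lvl_var]; exact k1
    | msubMvar1 h1 h2 h3 =>
        have hM := (ih _ (by omega)).1 h3
        have hA := (ih _ (by omega)).1 h2
        refine ⟨fun i => ?_, fun i => ?_⟩
        · have k1 := hM i
          have k2 := hA (i+1)
          simp only [lvl_mclo] at k1
          simp only [lvl_type] at k2
          simp only [lvl_mclo, lvl_mvar]
          rw [k1, k2]; omega
        · have k2 := hA (i+1)
          simp only [lvl_type] at k2
          simp only [lvl_mclo, lvl_mvar]
          rw [k2]; omega
    | mvarShift h1 =>
        exact ⟨fun i => by simp only [lvl_mclo, lvl_mvar], fun i => (ih _ (by omega)).1 h1 i⟩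
    | msubPi h1 hs h2 =>
        refine ⟨fun i => by simp only [lvl_mclo, lvl_pi], fun i => ?_⟩
        simp only [lvl_mclo, lvl_pi]; exact (ih _ (by omega)).1 h2 i
    | msubLam h1 h2 h3 =>
        refine ⟨fun i => by simp only [lvl_mclo, lvl_lam], fun i => ?_⟩
        simp only [lvl_mclo, lvl_lam, lvl_pi]; exact (ih _ (by omega)).1 h2 i
    | msubApp h1 h2 h3 =>
        refine ⟨fun i => by simp only [lvl_mclo, lvl_app], fun i => ?_⟩
        have k1 := (ih _ (by omega)).1 h2 i
        simp only [lvl_pi] at k1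
        simp only [lvl_mclo, lvl_app, lvl_clo]; exact k1
    | msubClo h1 h2 h3 =>
        refine ⟨fun i => by simp only [lvl_mclo, lvl_clo], fun i => ?_⟩
        simp only [lvl_mclo, lvl_clo]; exact (ih _ (by omega)).1 h3 i
    | etaLam h1 =>
        refine ⟨fun i => by simp only [lvl_lam, lvl_app, lvl_clo], fun i => ?_⟩
        have k1 := (ih _ (by omega)).1 h1 i
        simp only [lvl_pi] at k1
        simp only [lvl_pi]; exact k1

end LamInv
end CMTT
namespace CMTT
namespace LamInv

variable {Sig : Nat → Expr}

/-- All tails of a context are typed. -/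
def GoodCtx (Sig : Nat → Expr) (Δ : MCtx) : Ctx → Prop
  | [] => True
  | A :: Γ => HasType Sig Δ Γ A Expr.type ∧ GoodCtx Sig Δ Γ

/-- All tails of a meta-context are typed. -/
def GoodMCtx (Sig : Nat → Expr) : MCtx → Prop
  | [] => True
  | (Ψ, A) :: Δ => HasType Sig Δ Ψ A Expr.type ∧ GoodMCtx Sig Δ

lemma goodMCtx_wf : ∀ {Δ}, GoodMCtx Sig Δ → WfMCtx' Sig Δ
  | [], _ => ⟨1, WfMCtx.nil⟩
  | (Ψ, A) :: Δ, ⟨⟨m, hA⟩, _⟩ => ⟨m + 1, WfMCtx.cons hA⟩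

lemma goodCtx_wf {Δ} (gm : GoodMCtx Sig Δ) : ∀ {Γ}, GoodCtx Sig Δ Γ → WfCtx' Sig Δ Γ
  | [], _ => by obtain ⟨k, w⟩ := goodMCtx_wf gm; exact ⟨k + 1, WfCtx.nil w⟩
  | A :: Γ, ⟨⟨m, hA⟩, _⟩ => ⟨m + 1, WfCtx.cons hA⟩

lemma goodCtx_append {Δ Ψ} : ∀ Γ', GoodCtx Sig Δ (Γ' ++ Ψ) → GoodCtx Sig Δ Ψ
  | [], h => h
  | _ :: Γ', h => goodCtx_append Γ' h.2

lemma goodMCtx_append {Δ} : ∀ Δ', GoodMCtx Sig (Δ' ++ Δ) → GoodMCtx Sig Δ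
  | [], h => h
  | (Ψ, A) :: Δ', h => goodMCtx_append Δ' h.2

/-- Applying a well-typed meta-substitution to a good context gives a good context. -/
lemma mapGood {n Δ θ Δ'} (hθ : MSubTy Sig n Δ θ Δ') (gm : GoodMCtx Sig Δ') :
    ∀ Γ, GoodCtx Sig Δ' Γ → GoodCtx Sig Δ (mApCtx θ Γ)
  | [], _ => trivial
  | A :: Γ, ⟨⟨m, hA⟩, gΓ⟩ => by
    refine ⟨?_, mapGood hθ gm Γ gΓ⟩
    obtain ⟨k, wf⟩ := goodCtx_wf gm gΓ
    exact ⟨_, Types.conv (Types.mclo hθ hA) (Or.inr rfl) (EqE.msubType hθ wf)⟩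

/-- Context validity. -/
lemma ctxGood (Sig : Nat → Expr) : ∀ n : Nat,
    (∀ {Δ}, WfMCtx Sig n Δ → GoodMCtx Sig Δ)
    ∧ (∀ {Δ Γ}, WfCtx Sig n Δ Γ → GoodMCtx Sig Δ ∧ GoodCtx Sig Δ Γ)
    ∧ (∀ {Δ Γ E F}, Types Sig n Δ Γ E F → GoodMCtx Sig Δ ∧ GoodCtx Sig Δ Γ)
    ∧ (∀ {Δ Γ σ Ψ}, SubTy Sig n Δ Γ σ Ψ →
        GoodMCtx Sig Δ ∧ GoodCtx Sig Δ Γ ∧ GoodCtx Sig Δ Ψ)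
    ∧ (∀ {Δ θ Δ'}, MSubTy Sig n Δ θ Δ' → GoodMCtx Sig Δ ∧ GoodMCtx Sig Δ') := by
  intro n
  induction n using Nat.strong_induction_on with
  | _ n ih =>
  refine ⟨?_, ?_, ?_, ?_, ?_⟩
  · intro Δ h
    cases h with
    | nil => trivial
    | cons h1 => exact ⟨⟨_, h1⟩, ((ih _ (by omega)).2.2.1 h1).1⟩
  · intro Δ Γ h
    cases h with
    | nil w => exact ⟨(ih _ (by omega)).1 w, trivial⟩
    | cons h1 =>
        obtain ⟨gm, gc⟩ := (ih _ (by omega)).2.2.1 h1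
        exact ⟨gm, ⟨_, h1⟩, gc⟩
  · intro Δ Γ E F h
    cases h with
    | type w => exact (ih _ (by omega)).2.1 w
    | const w => exact (ih _ (by omega)).2.1 w
    | pi hs h1 =>
        obtain ⟨gm, gc⟩ := (ih _ (by omega)).2.2.1 h1
        exact ⟨gm, gc.2⟩
    | var1 h1 =>
        obtain ⟨gm, gc⟩ := (ih _ (by omega)).2.2.1 h1
        exact ⟨gm, ⟨_, h1⟩, gc⟩
    | varS h1 h2 =>
        obtain ⟨gm, gc⟩ := (ih _ (by omega)).2.2.1 h2
        exact ⟨gm, ⟨_, h2⟩, gc⟩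
    | mvar1 h1 =>
        obtain ⟨gm, gc⟩ := (ih _ (by omega)).2.2.1 h1
        exact ⟨⟨⟨_, h1⟩, gm⟩,
          mapGood (MSubTy.shift (Δ' := [(_, _)]) (WfMCtx.cons h1)) gm _ gc⟩
    | mvarS h1 h2 =>
        obtain ⟨gm, gc⟩ := (ih _ (by omega)).2.2.1 h1
        exact ⟨⟨⟨_, h2⟩, gm⟩,
          mapGood (MSubTy.shift (Δ' := [(_, _)]) (WfMCtx.cons h2)) gm _ gc⟩
    | lam h1 h2 =>
        obtain ⟨gm, gc⟩ := (ih _ (by omega)).2.2.1 h1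
        exact ⟨gm, gc.2⟩
    | app h1 h2 => exact (ih _ (by omega)).2.2.1 h1
    | cloKind h1 h2 =>
        obtain ⟨gm, gc, _⟩ := (ih _ (by omega)).2.2.2.1 h1
        exact ⟨gm, gc⟩
    | clo h1 h2 =>
        obtain ⟨gm, gc, _⟩ := (ih _ (by omega)).2.2.2.1 h1
        exact ⟨gm, gc⟩
    | mcloKind h1 h2 =>
        obtain ⟨gm, gm'⟩ := (ih _ (by omega)).2.2.2.2 h1
        obtain ⟨_, gc⟩ := (ih _ (by omega)).2.2.1 h2
        exact ⟨gm, mapGood h1 gm' _ gc⟩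
    | mclo h1 h2 =>
        obtain ⟨gm, gm'⟩ := (ih _ (by omega)).2.2.2.2 h1
        obtain ⟨_, gc⟩ := (ih _ (by omega)).2.2.1 h2
        exact ⟨gm, mapGood h1 gm' _ gc⟩
    | conv h1 hs h2 => exact (ih _ (by omega)).2.2.1 h1
  · intro Δ Γ σ Ψ h
    cases h with
    | shift w =>
        obtain ⟨gm, gc⟩ := (ih _ (by omega)).2.1 w
        exact ⟨gm, gc, goodCtx_append _ gc⟩
    | cons h1 h2 h3 =>
        obtain ⟨gm, gcΓ, gcΨ⟩ := (ih _ (by omega)).2.2.2.1 h1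
        exact ⟨gm, gcΓ, ⟨_, h2⟩, gcΨ⟩
    | comp h1 h2 =>
        obtain ⟨gm, gcΓ, _⟩ := (ih _ (by omega)).2.2.2.1 h1
        obtain ⟨_, _, gcΨ⟩ := (ih _ (by omega)).2.2.2.1 h2
        exact ⟨gm, gcΓ, gcΨ⟩
    | mclo h1 h2 =>
        obtain ⟨gm, gm'⟩ := (ih _ (by omega)).2.2.2.2 h1
        obtain ⟨_, gcΓ, gcΨ⟩ := (ih _ (by omega)).2.2.2.1 h2
        exact ⟨gm, mapGood h1 gm' _ gcΓ, mapGood h1 gm' _ gcΨ⟩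
  · intro Δ θ Δ' h
    cases h with
    | shift w =>
        have gm := (ih _ (by omega)).1 w
        exact ⟨gm, goodMCtx_append _ gm⟩
    | cons h1 h2 h3 =>
        obtain ⟨gm, gm'⟩ := (ih _ (by omega)).2.2.2.2 h1
        exact ⟨gm, ⟨_, h2⟩, gm'⟩
    | comp h1 h2 =>
        obtain ⟨gm, _⟩ := (ih _ (by omega)).2.2.2.2 h1
        obtain ⟨_, gm'⟩ := (ih _ (by omega)).2.2.2.2 h2
        exact ⟨gm, gm'⟩

/-- Lambda inversion, height-indexed version. -/
lemma lamInv (Sig : Nat → Expr) (n : Nat) : ∀ {Δ Γ M C},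
    Types Sig n Δ Γ (Expr.lam M) C →
    ∃ A B : Expr,
      (∃ s, IsSort s ∧ EqExpr Sig Δ Γ C (Expr.pi A B) s) ∧
      HasType Sig Δ Γ A Expr.type ∧
      HasType Sig Δ (A :: Γ) B Expr.type ∧
      HasType Sig Δ (A :: Γ) M B := by
  induction n using Nat.strong_induction_on with
  | _ n ih =>
  intro Δ Γ M C h
  cases h with
  | lam h1 h2 =>
      obtain ⟨gm, gc⟩ := (ctxGood Sig _).2.2.1 h1
      refine ⟨_, _, ⟨Expr.type, Or.inl rfl, ?_⟩, gc.1, ⟨_, h2⟩, ⟨_, h1⟩⟩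
      have tpi := Types.pi (Or.inl rfl) h2
      exact ⟨_, EqE.trans (EqE.symm (EqE.subId tpi)) (EqE.subId tpi)⟩
  | conv h1 hs h2 =>
      obtain ⟨A, B, ⟨s', hs', ⟨k, e1⟩⟩, hA, hB, hM⟩ := ih _ (by omega) h1
      have L1 := ((lvlLem Sig k).2 e1).2
      have L2 := ((lvlLem Sig _).2 h2).2
      rcases hs' with rfl | rfl <;> rcases hs with rfl | rfl
      · exact ⟨A, B, ⟨_, Or.inl rfl, _, EqE.trans (EqE.symm h2) e1⟩, hA, hB, hM⟩
      · exact absurd ((L2 1).mp ((L1 1).mpr Lvl.type)) (by simp [lvl_kind])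
      · exact absurd ((L2 2).mp ((L1 2).mpr Lvl.kind)) (by simp [lvl_type])
      · exact ⟨A, B, ⟨_, Or.inr rfl, _, EqE.trans (EqE.symm h2) e1⟩, hA, hB, hM⟩

end LamInv
end CMTT
open CMTT in
/-- Inversion for lambda abstraction. -/
theorem lam_inversion
    (Sig : Nat → Expr) (Δ : MCtx) (Γ : Ctx) (M C : Expr)
    (h : HasType Sig Δ Γ (Expr.lam M) C) :
    ∃ A B : Expr,
      (∃ s, IsSort s ∧ EqExpr Sig Δ Γ C (Expr.pi A B) s) ∧
      HasType Sig Δ Γ A Expr.type ∧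
      HasType Sig Δ (A :: Γ) B Expr.type ∧
      HasType Sig Δ (A :: Γ) M B := by
  obtain ⟨n, t⟩ := h
  exact CMTT.LamInv.lamInv Sig n t
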